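/- arXiv:1606.07141 — 3 statements merged into one kernel-verified Lean document; each statement's English description precedes it below -/
import Mathlib

section
/- The effective domain D_{ubar I} := {r : ubar I(r) < ∞} of the radial minimum function ubar I is an interval whose interior equals (r_min, r_max). -/
open MeasureTheory Set Filter
open scoped ENNReal NNReal RealInnerProductSpace Topology

noncomputable section

/-- The plane `ℝ²`. -/
abbrev E2 : Type := EuclideanSpace ℝ (Fin 2)

/-- The Laplace transform `𝓛(u) = 𝔼 e^{u·X₁}` of the random vector `X1`. -/
def lapT {Ω : Type*} [MeasurableSpace Ω] (P : Measure Ω) (X1 : Ω → E2) (u : E2) : ℝ :=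
  ∫ ω, Real.exp ⟪u, X1 ω⟫ ∂P

/-- The cumulant generating function `K(u) = log 𝓛(u)`. -/
def cgfT {Ω : Type*} [MeasurableSpace Ω] (P : Measure Ω) (X1 : Ω → E2) (u : E2) : ℝ :=
  Real.log (lapT P X1 u)

/-- The rate function `I = K*`, the Legendre–Fenchel conjugate of `K`.
Since `I ≥ 0` (the value `0 = 0·v - K(0)` is always attained in the supremum),
we may record it as an `ℝ≥0∞`-valued supremum, clamping negatives to `0`. -/
def rateI {Ω : Type*} [MeasurableSpace Ω] (P : Measure Ω) (X1 : Ω → E2) (v : E2) : ℝ≥0∞ :=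
  ⨆ u : E2, ENNReal.ofReal (⟪u, v⟫ - cgfT P X1 u)

/-- The radial minimum function `ubar I (r) = inf_{|ℓ|=1} I(rℓ)`, `+∞` for `r < 0`. -/
def radMin {Ω : Type*} [MeasurableSpace Ω] (P : Measure Ω) (X1 : Ω → E2) (r : ℝ) : ℝ≥0∞ :=
  if r < 0 then ⊤ else ⨅ ℓ ∈ {ℓ : E2 | ‖ℓ‖ = 1}, rateI P X1 (r • ℓ)

/-- The set of minimal directions `ubar Λ_r = argmin_{|ℓ|=1} I(rℓ)`. -/
def minDirs {Ω : Type*} [MeasurableSpace Ω] (P : Measure Ω) (X1 : Ω → E2) (r : ℝ) : Set E2 :=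
  {ℓ : E2 | ‖ℓ‖ = 1 ∧ ∀ ℓ' : E2, ‖ℓ'‖ = 1 → rateI P X1 (r • ℓ) ≤ rateI P X1 (r • ℓ')}

/-- The topological support of a measure on `ℝ²`: the points all of whose open
neighbourhoods have positive measure. -/
def msupp (ν : Measure E2) : Set E2 := {x | ∀ U : Set E2, IsOpen U → x ∈ U → 0 < ν U}

/-- The mean `μ = 𝔼 X₁`. -/
def meanv {Ω : Type*} [MeasurableSpace Ω] (P : Measure Ω) (X1 : Ω → E2) : E2 :=
  ∫ ω, X1 ω ∂P

/-- `r_min = min { |x| : x ∈ conv (supp X₁) }`. -/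
def rmin {Ω : Type*} [MeasurableSpace Ω] (P : Measure Ω) (X1 : Ω → E2) : ℝ :=
  sInf (norm '' (convexHull ℝ (msupp (P.map X1))))

/-- `r_max = max { |x| : x ∈ supp X₁ }`, as an element of `[0,∞]` (possibly `∞`). -/
def rmaxE {Ω : Type*} [MeasurableSpace Ω] (P : Measure Ω) (X1 : Ω → E2) : ℝ≥0∞ :=
  ⨆ y ∈ msupp (P.map X1), (‖y‖₊ : ℝ≥0∞)

/-- Convexity of an `[0,∞]`-valued function on a subset of `ℝ`. -/
def ENNConvexOn (s : Set ℝ) (g : ℝ → ℝ≥0∞) : Prop :=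
  ∀ ⦃x⦄, x ∈ s → ∀ ⦃y⦄, y ∈ s → ∀ a b : ℝ≥0, a + b = 1 →
    g ((a : ℝ) * x + (b : ℝ) * y) ≤ (a : ℝ≥0∞) * g x + (b : ℝ≥0∞) * g y

/-- The largest convex minorant of an `[0,∞]`-valued function on `ℝ`. -/
def convMin (g : ℝ → ℝ≥0∞) (x : ℝ) : ℝ≥0∞ :=
  ⨆ h ∈ {h : ℝ → ℝ≥0∞ | ENNConvexOn Set.univ h ∧ ∀ y, h y ≤ g y}, h x

/-!
The effective domain `C = {v | I v < ∞}` of the rate function is convex (`I` is a supremum of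
affine functions), and `{r | ubar I r < ∞}` is exactly its image under the norm, hence an
interval. The closure of `C` is the closed convex hull of the support. If `v` is separated from
that hull by a functional `w` with `⟪w, ·⟫ < c` there and `⟪w, v⟫ > c`, then `K (t • w) ≤ t * c`
forces `I v = ∞`. Conversely, by Jensen's inequality the mean of `X₁` conditioned on
`X₁ ∈ B` satisfies `I ≤ -log P(X₁ ∈ B)`, and taking `B` a small ball around a support point puts
points of `C` arbitrarily close to every point of the support. So the norms of points of `C` lie
in `[r_min, r_max]` and get below every `r > r_min` and above every `r < r_max`.
-/

lemma sInf_norm_image_le_of_mem_closure {E : Type*} [SeminormedAddCommGroup E] {s : Set E}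
    {v : E} (hv : v ∈ closure s) : sInf (norm '' s) ≤ ‖v‖ := by
  have hbdd : BddBelow (norm '' s) := ⟨0, by rintro _ ⟨y, -, rfl⟩; exact norm_nonneg y⟩
  exact closure_minimal (fun x hx => csInf_le hbdd ⟨x, hx, rfl⟩)
    (isClosed_le continuous_const continuous_norm) hv

lemma ofReal_norm_le_biSup_of_mem_closure_convexHull {E : Type*} [NormedAddCommGroup E]
    [NormedSpace ℝ E] {s : Set E} {v : E} (hv : v ∈ closure (convexHull ℝ s)) :
    ENNReal.ofReal ‖v‖ ≤ ⨆ y ∈ s, (‖y‖₊ : ℝ≥0∞) := by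
  set R := ⨆ y ∈ s, (‖y‖₊ : ℝ≥0∞)
  rcases eq_or_ne R ⊤ with hR | hR
  · exact hR ▸ le_top
  have hs : s ⊆ Metric.closedBall 0 R.toReal := fun y hy => by
    rw [mem_closedBall_zero_iff, ← ENNReal.ofReal_le_iff_le_toReal hR, ofReal_norm]
    exact le_biSup (fun y : E => (‖y‖₊ : ℝ≥0∞)) hy
  have hvR : ‖v‖ ≤ R.toReal := mem_closedBall_zero_iff.1 <|
    closure_minimal (convexHull_min hs (convex_closedBall 0 _)) Metric.isClosed_closedBall hv
  exact (ENNReal.ofReal_le_iff_le_toReal hR).2 hvR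

lemma exists_norm_smul_eq {E : Type*} [NormedAddCommGroup E] [NormedSpace ℝ E] [Nontrivial E]
    (v : E) : ∃ ℓ : E, ‖ℓ‖ = 1 ∧ ‖v‖ • ℓ = v := by
  rcases eq_or_ne v 0 with rfl | hv
  · obtain ⟨ℓ, hℓ⟩ := exists_norm_eq E zero_le_one
    exact ⟨ℓ, hℓ, by simp⟩
  · exact ⟨‖v‖⁻¹ • v, norm_smul_inv_norm hv, smul_inv_smul₀ (norm_ne_zero_iff.2 hv) v⟩

lemma interior_eq_of_Ioo_subset_of_subset_Icc {D : Set ℝ} {a : ℝ} {b : ℝ≥0∞} (ha : 0 ≤ a)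
    (hsub : {r | a < r ∧ ENNReal.ofReal r < b} ⊆ D)
    (hbound : ∀ r ∈ D, a ≤ r ∧ ENNReal.ofReal r ≤ b) :
    interior D = {r | a < r ∧ ENNReal.ofReal r < b} := by
  refine subset_antisymm (fun r hr => ?_) (interior_maximal hsub ?_)
  · obtain ⟨ε, hε, hball⟩ := Metric.isOpen_iff.1 isOpen_interior r hr
    have hmem : ∀ {x}, |x - r| < ε → x ∈ D := fun hx => interior_subset (hball hx)
    have hleft := (hbound _ (hmem (x := r - ε / 2) (by rw [abs_lt]; constructor <;> linarith))).1
    have hright := (hbound _ (hmem (x := r + ε / 2) (by rw [abs_lt]; constructor <;> linarith))).2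
    refine ⟨by linarith, lt_of_lt_of_le ?_ hright⟩
    exact ENNReal.ofReal_lt_ofReal_iff'.2 ⟨by linarith, by linarith⟩
  · exact (isOpen_lt continuous_const continuous_id).inter
      (isOpen_Iio.preimage ENNReal.continuous_ofReal)

section RadialDomain

variable {Ω : Type*} [MeasurableSpace Ω] (P : Measure Ω) (X1 : Ω → E2)

def rateDom : Set E2 := {v | rateI P X1 v ≠ ⊤}

lemma msupp_eq_support (ν : Measure E2) : msupp ν = ν.support := by
  ext x
  simp only [msupp, Measure.support_eq_forall_isOpen, mem_ofPred_eq]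
  exact forall_congr' fun U => forall_comm

lemma ae_mem_msupp_map (hX : AEMeasurable X1 P) :
    ∀ᵐ ω ∂P, X1 ω ∈ msupp (P.map X1) := by
  rw [msupp_eq_support]
  exact ae_of_ae_map hX Measure.support_mem_ae

lemma convex_rateDom : Convex ℝ (rateDom P X1) := by
  intro x hx y hy a b ha hb hab
  have hshrink : ∀ {c α : ℝ}, 0 ≤ c → c ≤ 1 → ENNReal.ofReal (c * α) ≤ ENNReal.ofReal α := by
    intro c α hc0 hc1
    rw [ENNReal.ofReal_le_ofReal_iff']
    rcases le_total 0 α with h | h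
    · left; nlinarith
    · right; nlinarith
  refine ne_top_of_le_ne_top (ENNReal.add_ne_top.2 ⟨hx, hy⟩) (iSup_le fun u => ?_)
  have hsplit : ⟪u, a • x + b • y⟫ - cgfT P X1 u =
      a * (⟪u, x⟫ - cgfT P X1 u) + b * (⟪u, y⟫ - cgfT P X1 u) := by
    rw [inner_add_right, real_inner_smul_right, real_inner_smul_right]
    linear_combination (cgfT P X1 u) * hab
  calc ENNReal.ofReal (⟪u, a • x + b • y⟫ - cgfT P X1 u)
      ≤ ENNReal.ofReal (a * (⟪u, x⟫ - cgfT P X1 u)) + ENNReal.ofReal (b * (⟪u, y⟫ - cgfT P X1 u)) :=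
        hsplit ▸ ENNReal.ofReal_add_le
    _ ≤ ENNReal.ofReal (⟪u, x⟫ - cgfT P X1 u) + ENNReal.ofReal (⟪u, y⟫ - cgfT P X1 u) :=
        add_le_add (hshrink ha (by linarith)) (hshrink hb (by linarith))
    _ ≤ rateI P X1 x + rateI P X1 y :=
        add_le_add (le_iSup (fun u => ENNReal.ofReal (⟪u, x⟫ - cgfT P X1 u)) u)
          (le_iSup (fun u => ENNReal.ofReal (⟪u, y⟫ - cgfT P X1 u)) u)

lemma rateI_setAverage_le [IsFiniteMeasure P]
    (hLap : ∀ u : E2, Integrable (fun ω => Real.exp ⟪u, X1 ω⟫) P)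
    {A : Set Ω} (hA0 : P A ≠ 0) (hXA : IntegrableOn X1 A P) :
    rateI P X1 (⨍ ω in A, X1 ω ∂P) ≤ ENNReal.ofReal (-Real.log (P.real A)) := by
  have hPA : 0 < P.real A := ENNReal.toReal_pos hA0 (measure_ne_top P A)
  refine iSup_le fun u => ENNReal.ofReal_le_ofReal ?_
  have hinner : ⟪u, ⨍ ω in A, X1 ω ∂P⟫ = ⨍ ω in A, ⟪u, X1 ω⟫ ∂P := by
    rw [setAverage_eq, setAverage_eq, real_inner_smul_right, smul_eq_mul, integral_inner hXA]
  have hjensen : Real.exp ⟪u, ⨍ ω in A, X1 ω ∂P⟫ ≤ ⨍ ω in A, Real.exp ⟪u, X1 ω⟫ ∂P :=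
    hinner ▸ convexOn_exp.map_set_average_le Real.continuous_exp.continuousOn isClosed_univ hA0
      (measure_ne_top P A) (ae_of_all _ fun _ => mem_univ _) (hXA.const_inner u)
      (hLap u).integrableOn
  have hlap : P.real A * Real.exp ⟪u, ⨍ ω in A, X1 ω ∂P⟫ ≤ lapT P X1 u :=
    calc P.real A * Real.exp ⟪u, ⨍ ω in A, X1 ω ∂P⟫
        ≤ P.real A * ⨍ ω in A, Real.exp ⟪u, X1 ω⟫ ∂P := by gcongr
      _ = ∫ ω in A, Real.exp ⟪u, X1 ω⟫ ∂P := by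
        rw [setAverage_eq, smul_eq_mul, mul_inv_cancel_left₀ hPA.ne']
      _ ≤ lapT P X1 u :=
        setIntegral_le_integral (hLap u) (ae_of_all _ fun _ => (Real.exp_pos _).le)
  have hlog := Real.log_le_log (by positivity) hlap
  rw [Real.log_mul hPA.ne' (Real.exp_pos _).ne', Real.log_exp] at hlog
  unfold cgfT
  linarith

lemma msupp_subset_closure_rateDom [IsFiniteMeasure P] (hX : Measurable X1)
    (hLap : ∀ u : E2, Integrable (fun ω => Real.exp ⟪u, X1 ω⟫) P) :
    msupp (P.map X1) ⊆ closure (rateDom P X1) := by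
  intro x hx
  refine Metric.mem_closure_iff.2 fun ε hε => ?_
  set A := X1 ⁻¹' Metric.ball x (ε / 2)
  have hA : MeasurableSet A := hX Metric.isOpen_ball.measurableSet
  have hA0 : P A ≠ 0 := by
    rw [← Measure.map_apply hX Metric.isOpen_ball.measurableSet]
    exact (hx _ Metric.isOpen_ball (Metric.mem_ball_self (half_pos hε))).ne'
  have hXA : ∀ ω ∈ A, X1 ω ∈ Metric.closedBall x (ε / 2) := fun ω hω =>
    Metric.ball_subset_closedBall hω
  have hint : IntegrableOn X1 A P :=
    Measure.integrableOn_of_bounded (measure_ne_top P A) hX.aestronglyMeasurable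
      (M := ‖x‖ + ε / 2) <| (ae_restrict_mem hA).mono fun ω hω => by
        have := mem_closedBall_iff_norm.1 (hXA ω hω)
        linarith [norm_le_norm_add_norm_sub' (X1 ω) x]
  have havg : ⨍ ω in A, X1 ω ∂P ∈ Metric.closedBall x (ε / 2) :=
    (convex_closedBall x _).set_average_mem Metric.isClosed_closedBall hA0 (measure_ne_top P A)
      ((ae_restrict_mem hA).mono hXA) hint
  refine ⟨_, ne_top_of_le_ne_top ENNReal.ofReal_ne_top (rateI_setAverage_le P X1 hLap hA0 hint),
    ?_⟩
  rw [dist_comm]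
  exact (Metric.mem_closedBall.1 havg).trans_lt (half_lt_self hε)

lemma cgfT_le_of_ae_inner_le [IsProbabilityMeasure P] {u : E2}
    (hLap : Integrable (fun ω => Real.exp ⟪u, X1 ω⟫) P) {c : ℝ} (h : ∀ᵐ ω ∂P, ⟪u, X1 ω⟫ ≤ c) :
    cgfT P X1 u ≤ c := by
  have hlap : lapT P X1 u ≤ Real.exp c :=
    calc lapT P X1 u ≤ ∫ _, Real.exp c ∂P :=
          integral_mono_ae hLap (integrable_const _) (h.mono fun _ => Real.exp_le_exp.2)
      _ = Real.exp c := by simp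
  calc cgfT P X1 u ≤ Real.log (Real.exp c) := Real.log_le_log (integral_exp_pos hLap) hlap
    _ = c := Real.log_exp c

lemma rateDom_subset_closure_convexHull [IsProbabilityMeasure P] (hX : AEMeasurable X1 P)
    (hLap : ∀ u : E2, Integrable (fun ω => Real.exp ⟪u, X1 ω⟫) P) :
    rateDom P X1 ⊆ closure (convexHull ℝ (msupp (P.map X1))) := by
  intro v hv
  by_contra hvC
  obtain ⟨f, c, hfC, hcv⟩ := geometric_hahn_banach_closed_point
    (convex_convexHull ℝ _).closure isClosed_closure hvC
  set w : E2 := (InnerProductSpace.toDual ℝ E2).symm f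
  have hw : ∀ y, ⟪w, y⟫ = f y := fun y => InnerProductSpace.toDual_symm_apply
  have hray : ∀ t : ℝ, 0 ≤ t → ENNReal.ofReal (t * (f v - c)) ≤ rateI P X1 v := by
    intro t ht
    have hcgf : cgfT P X1 (t • w) ≤ t * c :=
      cgfT_le_of_ae_inner_le P X1 (hLap _) <| (ae_mem_msupp_map P X1 hX).mono fun ω hω => by
        rw [real_inner_smul_left, hw]
        exact mul_le_mul_of_nonneg_left (hfC _ (subset_closure (subset_convexHull ℝ _ hω))).le ht
    refine le_trans (ENNReal.ofReal_le_ofReal ?_)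
      (le_iSup (fun u => ENNReal.ofReal (⟪u, v⟫ - cgfT P X1 u)) (t • w))
    rw [real_inner_smul_left, hw]
    linarith
  have hgap : 0 < f v - c := sub_pos.2 hcv
  refine hv (ENNReal.eq_top_of_forall_nnreal_le fun q => ?_)
  simpa [div_mul_cancel₀ _ hgap.ne'] using hray (q / (f v - c)) (by positivity)

theorem closure_rateDom [IsProbabilityMeasure P] (hX : Measurable X1)
    (hLap : ∀ u : E2, Integrable (fun ω => Real.exp ⟪u, X1 ω⟫) P) :
    closure (rateDom P X1) = closure (convexHull ℝ (msupp (P.map X1))) :=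
  subset_antisymm
    (closure_minimal (rateDom_subset_closure_convexHull P X1 hX.aemeasurable hLap)
      isClosed_closure)
    (closure_minimal (convexHull_min (msupp_subset_closure_rateDom P X1 hX hLap)
      (convex_rateDom P X1).closure) isClosed_closure)

lemma radMin_ne_top_iff {r : ℝ} : radMin P X1 r ≠ ⊤ ↔ r ∈ norm '' rateDom P X1 := by
  unfold radMin
  split_ifs with hr
  · simp only [ne_eq, not_true_eq_false, false_iff]
    rintro ⟨v, -, rfl⟩
    exact (norm_nonneg v).not_gt hr
  · simp only [ne_eq, iInf_eq_top, mem_ofPred_eq, not_forall]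
    constructor
    · rintro ⟨ℓ, hℓ, hI⟩
      refine ⟨r • ℓ, hI, ?_⟩
      rw [norm_smul, hℓ, mul_one, Real.norm_of_nonneg (not_lt.1 hr)]
    · rintro ⟨v, hv, rfl⟩
      obtain ⟨ℓ, hℓ, hvℓ⟩ := exists_norm_smul_eq v
      exact ⟨ℓ, hℓ, by rw [hvℓ]; exact hv⟩

lemma rmin_nonneg : 0 ≤ rmin P X1 :=
  Real.sInf_nonneg (by rintro _ ⟨y, -, rfl⟩; exact norm_nonneg y)

lemma exists_mem_rateDom_norm_lt [IsProbabilityMeasure P] (hX : Measurable X1)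
    (hLap : ∀ u : E2, Integrable (fun ω => Real.exp ⟪u, X1 ω⟫) P) {r : ℝ} (hr : rmin P X1 < r) :
    ∃ v ∈ rateDom P X1, ‖v‖ < r := by
  have : IsProbabilityMeasure (P.map X1) := Measure.isProbabilityMeasure_map hX.aemeasurable
  have hS : (msupp (P.map X1)).Nonempty := by
    rw [msupp_eq_support, Measure.nonempty_support_iff]
    exact IsProbabilityMeasure.ne_zero _
  obtain ⟨_, ⟨a, ha, rfl⟩, har⟩ := exists_lt_of_csInf_lt ((hS.convexHull (𝕜 := ℝ)).image norm) hr
  have ha' : a ∈ closure (rateDom P X1) := by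
    rw [closure_rateDom P X1 hX hLap]
    exact subset_closure ha
  obtain ⟨v, hvr, hv⟩ := mem_closure_iff.1 ha' {y | ‖y‖ < r}
    (isOpen_lt continuous_norm continuous_const) har
  exact ⟨v, hv, hvr⟩

lemma exists_mem_rateDom_lt_norm [IsFiniteMeasure P] (hX : Measurable X1)
    (hLap : ∀ u : E2, Integrable (fun ω => Real.exp ⟪u, X1 ω⟫) P) {r : ℝ}
    (hr : ENNReal.ofReal r < rmaxE P X1) : ∃ v ∈ rateDom P X1, r < ‖v‖ := by
  obtain ⟨b, hb, hrb⟩ := lt_biSup_iff.1 hr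
  rw [← ENNReal.ofReal_coe_nnreal, coe_nnnorm, ENNReal.ofReal_lt_ofReal_iff'] at hrb
  obtain ⟨v, hvr, hv⟩ := mem_closure_iff.1 (msupp_subset_closure_rateDom P X1 hX hLap hb)
    {y | r < ‖y‖} (isOpen_lt continuous_const continuous_norm) hrb.1
  exact ⟨v, hv, hvr⟩

end RadialDomain

/-- The effective domain `D_{ubar I} = {r : ubar I(r) < ∞}` of the radial
minimum function `ubar I` is an interval whose interior equals `(r_min, r_max)`.
(Here `r < r_max` is expressed as `ENNReal.ofReal r < rmaxE`, which also covers `r_max = ∞`.) -/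
theorem effective_domain_radMin_interval
    {Ω : Type*} [MeasurableSpace Ω] (P : Measure Ω) [IsProbabilityMeasure P]
    (X1 : Ω → E2) (hX : Measurable X1)
    (hLap : ∀ u : E2, Integrable (fun ω => Real.exp ⟪u, X1 ω⟫) P) :
    ({r : ℝ | radMin P X1 r ≠ ⊤}).OrdConnected ∧
      interior {r : ℝ | radMin P X1 r ≠ ⊤} =
        {r : ℝ | rmin P X1 < r ∧ ENNReal.ofReal r < rmaxE P X1} := by
  have hD : {r : ℝ | radMin P X1 r ≠ ⊤} = norm '' rateDom P X1 :=
    Set.ext fun r => radMin_ne_top_iff P X1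
  have hconn : (norm '' rateDom P X1).OrdConnected :=
    ((convex_rateDom P X1).isPreconnected.image _ continuous_norm.continuousOn).ordConnected
  rw [hD]
  refine ⟨hconn, interior_eq_of_Ioo_subset_of_subset_Icc (rmin_nonneg P X1) ?_ ?_⟩
  · rintro r ⟨hmin, hmax⟩
    obtain ⟨a, ha, har⟩ := exists_mem_rateDom_norm_lt P X1 hX hLap hmin
    obtain ⟨b, hb, hrb⟩ := exists_mem_rateDom_lt_norm P X1 hX hLap hmax
    exact hconn.out (mem_image_of_mem _ ha) (mem_image_of_mem _ hb) ⟨har.le, hrb.le⟩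
  · rintro _ ⟨v, hv, rfl⟩
    have hvC := rateDom_subset_closure_convexHull P X1 hX.aemeasurable hLap hv
    exact ⟨sInf_norm_image_le_of_mem_closure hvC,
      ofReal_norm_le_biSup_of_mem_closure_convexHull hvC⟩

end
end

section
/- If X_1 has a Gaussian distribution on ℝ² with mean μ and covariance matrix Σ (possibly degenerate), then the radial minimum function ubar I is convex. -/
open MeasureTheory Set Filter
open scoped ENNReal NNReal RealInnerProductSpace Topology

noncomputable section

/-- The covariance matrix `Σ = 𝔼(X₁X₁ᵀ) − μμᵀ`. -/
def covM {Ω : Type*} [MeasurableSpace Ω] (P : Measure Ω) (X1 : Ω → E2) :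
    Matrix (Fin 2) (Fin 2) ℝ :=
  Matrix.of fun i j => (∫ ω, X1 ω i * X1 ω j ∂P) - meanv P X1 i * meanv P X1 j


/-!
For a Gaussian law the cumulant generating function is `K u = ⟪u, μ⟫ + ⟪Σ u, u⟫ / 2`, so the
rate function `I` is a convex quadratic, infinite off `μ + range Σ`. Since `I` is quasiconvex and
the segment between a point inside and a point outside the circle of radius `r` crosses it, the
minimum of `I` on that circle is the larger of its infima over `‖x‖ ≤ r` and over `‖x‖ ≥ r`.
The first is convex in `r` because `I` is convex. For the second, a Lagrange multiplier `l` for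
minimising `I` on the circle through a point `xh` gives the convex minorant
`t ↦ l / 2 * (t ^ 2 - ⟪xh, μ⟫)` of the second infimum, touching it at `t = ‖xh‖`. In the plane
such a multiplier exists on every circle of radius `r ≥ ‖μ‖`, by solving the secular equation in
an eigenbasis of `Σ`, including the hard case where `μ` is orthogonal to the top eigenvector.
-/

open ProbabilityTheory

theorem ConvexOn.of_forall_lt_exists_minorant {𝕜 E β : Type*} [Semiring 𝕜] [PartialOrder 𝕜]
    [AddCommMonoid E] [SMul 𝕜 E] [AddCommMonoid β] [LinearOrder β] [IsOrderedAddMonoid β]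
    [Module 𝕜 β] [PosSMulMono 𝕜 β] {s : Set E} {g : E → β} (hs : Convex 𝕜 s)
    (h : ∀ x ∈ s, ∀ c < g x, ∃ φ : E → β, ConvexOn 𝕜 s φ ∧ (∀ y ∈ s, φ y ≤ g y) ∧ c < φ x) :
    ConvexOn 𝕜 s g := by
  refine ⟨hs, fun x hx y hy a b ha hb hab => le_of_forall_lt fun c hc => ?_⟩
  obtain ⟨φ, hφ, hφg, hcφ⟩ := h _ (hs hx hy ha hb hab) c hc
  calc c < φ (a • x + b • y) := hcφ
    _ ≤ a • φ x + b • φ y := hφ.2 hx hy ha hb hab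
    _ ≤ a • g x + b • g y := by gcongr <;> exact hφg _ ‹_›

theorem ConvexOn.ennreal_ofReal {E : Type*} [AddCommGroup E] [Module ℝ E] {s : Set E}
    {f : E → ℝ} (hf : ConvexOn ℝ s f) : ConvexOn ℝ≥0 s fun x => ENNReal.ofReal (f x) := by
  refine ⟨NNReal.convex_iff.2 hf.1, fun x hx y hy a b _ _ hab => ?_⟩
  have hab' : (a : ℝ) + b = 1 := by exact_mod_cast hab
  simp only [NNReal.smul_def, ENNReal.smul_def, smul_eq_mul]
  calc ENNReal.ofReal (f ((a : ℝ) • x + (b : ℝ) • y))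
      ≤ ENNReal.ofReal (a * f x + b * f y) :=
        ENNReal.ofReal_le_ofReal (hf.2 hx hy a.2 b.2 hab')
    _ ≤ ENNReal.ofReal (a * f x) + ENNReal.ofReal (b * f y) := ENNReal.ofReal_add_le
    _ = a * ENNReal.ofReal (f x) + b * ENNReal.ofReal (f y) := by
        rw [ENNReal.ofReal_mul a.coe_nonneg, ENNReal.ofReal_mul b.coe_nonneg,
          ENNReal.ofReal_coe_nnreal, ENNReal.ofReal_coe_nnreal]

theorem ConvexOn.ennConvexOn_ite_top {g : ℝ → ℝ≥0∞} (hg : ConvexOn ℝ≥0 (Ici 0) g) :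
    ENNConvexOn univ fun r => if r < 0 then ⊤ else g r := by
  intro x _ y _ a b hab
  rcases eq_or_ne a 0 with rfl | ha
  · simp_all
  rcases eq_or_ne b 0 with rfl | hb
  · simp_all
  by_cases hx : x < 0
  · simp [hx, ENNReal.mul_top (ENNReal.coe_ne_zero.2 ha)]
  by_cases hy : y < 0
  · simp [hy, ENNReal.mul_top (ENNReal.coe_ne_zero.2 hb)]
  rw [not_lt] at hx hy
  have hxy : 0 ≤ (a : ℝ) * x + b * y := by positivity
  simpa [hx.not_gt, hy.not_gt, hxy.not_gt, NNReal.smul_def, ENNReal.smul_def] using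
    hg.2 (mem_Ici.2 hx) (mem_Ici.2 hy) a.2 b.2 hab

theorem ENNReal.smul_biInf {ι : Type*} {A : Set ι} (hA : A.Nonempty) (f : ι → ℝ≥0∞) (a : ℝ≥0) :
    a • ⨅ x ∈ A, f x = ⨅ x ∈ A, a • f x := by
  have := hA.to_subtype
  simp only [ENNReal.smul_def, smul_eq_mul, iInf_subtype']
  exact ENNReal.mul_iInf' (fun h => absurd h ENNReal.coe_ne_top) fun _ => inferInstance

section Conjugate

variable {E : Type*} [NormedAddCommGroup E] [InnerProductSpace ℝ E]

def ennConjugate (K : E → ℝ) (v : E) : ℝ≥0∞ :=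
  ⨆ u, ENNReal.ofReal (⟪u, v⟫ - K u)

theorem convexOn_ennConjugate (K : E → ℝ) : ConvexOn ℝ≥0 univ (ennConjugate K) := by
  refine ⟨convex_univ, fun x _ y _ a b ha hb hab => iSup_le fun u => ?_⟩
  have hu : ConvexOn ℝ≥0 univ fun v => ENNReal.ofReal (⟪u, v⟫ - K u) := by
    simpa [sub_eq_add_neg] using
      (((innerₛₗ ℝ u).convexOn convex_univ).add_const (-K u)).ennreal_ofReal
  calc _ ≤ a • ENNReal.ofReal (⟪u, x⟫ - K u) + b • ENNReal.ofReal (⟪u, y⟫ - K u) :=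
        hu.2 trivial trivial ha hb hab
    _ ≤ a • ennConjugate K x + b • ennConjugate K y := by
        gcongr <;> exact le_iSup (fun u => ENNReal.ofReal (⟪u, _⟫ - K u)) u

end Conjugate

section Radial

variable {E : Type*} [NormedAddCommGroup E]

def infNormLe (S : E → ℝ≥0∞) (r : ℝ) : ℝ≥0∞ := ⨅ x ∈ {x : E | ‖x‖ ≤ r}, S x

def infNormGe (S : E → ℝ≥0∞) (r : ℝ) : ℝ≥0∞ := ⨅ x ∈ {x : E | r ≤ ‖x‖}, S x

theorem infNormGe_le {S : E → ℝ≥0∞} {x : E} {r : ℝ} (h : r ≤ ‖x‖) : infNormGe S r ≤ S x :=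
  iInf₂_le x h

variable [NormedSpace ℝ E]

def radialInf (S : E → ℝ≥0∞) (r : ℝ) : ℝ≥0∞ :=
  if r < 0 then ⊤ else ⨅ ℓ ∈ {ℓ : E | ‖ℓ‖ = 1}, S (r • ℓ)

theorem iInf_smul_unit_eq_iInf_norm_eq [Nontrivial E] (S : E → ℝ≥0∞) {r : ℝ} (hr : 0 ≤ r) :
    ⨅ ℓ ∈ {ℓ : E | ‖ℓ‖ = 1}, S (r • ℓ) = ⨅ x ∈ {x : E | ‖x‖ = r}, S x := by
  have h : (r • ·) '' {ℓ : E | ‖ℓ‖ = 1} = {x : E | ‖x‖ = r} := by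
    simpa [Set.image_smul, Real.norm_of_nonneg hr, Metric.sphere, dist_eq_norm] using
      smul_sphere r (0 : E) zero_le_one
  rw [← h, iInf_image]

theorem iInf_norm_eq_eq_max {S : E → ℝ≥0∞} (hS : QuasiconvexOn ℝ univ S) (r : ℝ) :
    ⨅ x ∈ {x : E | ‖x‖ = r}, S x = max (infNormLe S r) (infNormGe S r) := by
  refine le_antisymm (forall_gt_iff_le.1 fun c hc => ?_) ?_
  · obtain ⟨x₁, hx₁, hSx₁⟩ : ∃ x₁ : E, ‖x₁‖ ≤ r ∧ S x₁ < c := by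
      simpa [infNormLe, iInf_lt_iff] using lt_of_le_of_lt le_sup_left hc
    obtain ⟨x₂, hx₂, hSx₂⟩ : ∃ x₂ : E, r ≤ ‖x₂‖ ∧ S x₂ < c := by
      simpa [infNormGe, iInf_lt_iff] using lt_of_le_of_lt le_sup_right hc
    obtain ⟨x, hx, hxr⟩ := (convex_segment x₁ x₂).isPreconnected.intermediate_value
      (left_mem_segment ℝ x₁ x₂) (right_mem_segment ℝ x₁ x₂) continuous_norm.continuousOn
      ⟨hx₁, hx₂⟩
    have hSx : S x ≤ max (S x₁) (S x₂) :=
      ((hS _).segment_subset ⟨trivial, le_max_left _ _⟩ ⟨trivial, le_max_right _ _⟩ hx).2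
    exact lt_of_le_of_lt (biInf_le _ hxr) (lt_of_le_of_lt hSx (max_lt hSx₁ hSx₂))
  · exact max_le (biInf_mono fun x hx => hx.le) (biInf_mono fun x hx => hx.ge)

theorem convexOn_infNormLe {S : E → ℝ≥0∞} (hS : ConvexOn ℝ≥0 univ S) :
    ConvexOn ℝ≥0 (Ici 0) (infNormLe S) := by
  refine ⟨NNReal.convex_iff.2 (convex_Ici 0), fun r₁ hr₁ r₂ hr₂ a b ha hb hab => ?_⟩
  have hne : ∀ r ∈ Ici (0 : ℝ), {x : E | ‖x‖ ≤ r}.Nonempty := fun r hr => ⟨0, by simpa using hr⟩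
  unfold infNormLe
  rw [ENNReal.smul_biInf (hne r₁ hr₁), ENNReal.smul_biInf (hne r₂ hr₂)]
  simp only [iInf_subtype']
  refine ENNReal.le_iInf_add_iInf fun x₁ x₂ => ?_
  have hmem : ‖a • (x₁ : E) + b • (x₂ : E)‖ ≤ a • r₁ + b • r₂ := by
    simp only [NNReal.smul_def, smul_eq_mul]
    calc _ ≤ ‖(a : ℝ) • (x₁ : E)‖ + ‖(b : ℝ) • (x₂ : E)‖ := norm_add_le _ _
      _ ≤ a * r₁ + b * r₂ := by
        rw [norm_smul, norm_smul, NNReal.norm_eq, NNReal.norm_eq]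
        gcongr
        exacts [x₁.2, x₂.2]
  exact (iInf_le (fun x : {x : E | ‖x‖ ≤ a • r₁ + b • r₂} => S x) ⟨_, hmem⟩).trans
    (hS.2 trivial trivial ha hb hab)

theorem ennConvexOn_radialInf [Nontrivial E] {S : E → ℝ≥0∞} (hS : ConvexOn ℝ≥0 univ S)
    (hSge : ConvexOn ℝ≥0 (Ici 0) (infNormGe S)) : ENNConvexOn univ (radialInf S) := by
  have hq : QuasiconvexOn ℝ univ S := fun c => NNReal.convex_iff.1 (hS.quasiconvexOn c)
  have h : radialInf S = fun r => if r < 0 then ⊤ else (infNormLe S ⊔ infNormGe S) r := by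
    ext r
    unfold radialInf
    split_ifs with hr
    · rfl
    · rw [iInf_smul_unit_eq_iInf_norm_eq S (not_lt.1 hr), iInf_norm_eq_eq_max hq]; rfl
  rw [h]
  exact ((convexOn_infNormLe hS).sup hSge).ennConvexOn_ite_top

end Radial

section Quadratic

variable {E : Type*} [NormedAddCommGroup E] [InnerProductSpace ℝ E]
  {T : E →ₗ[ℝ] E} {μ xh : E} {l : ℝ}

def quadCgf (μ : E) (T : E →ₗ[ℝ] E) (u : E) : ℝ := ⟪u, μ⟫ + ⟪T u, u⟫ / 2

/-- `l` is a multiplier for minimising the conjugate of `quadCgf μ T` on the sphere through `xh`: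
stationarity `(1 - l T) xh = μ` and the second-order condition `l T ≤ 1`. -/
def IsLagrangeMultiplier (T : E →ₗ[ℝ] E) (μ : E) (l : ℝ) (xh : E) : Prop :=
  0 ≤ l ∧ (∀ x, l * ⟪T x, x⟫ ≤ ‖x‖ ^ 2) ∧ xh - l • T xh = μ

theorem ennConjugate_quadCgf_self (hT : T.IsPositive) : ennConjugate (quadCgf μ T) μ = 0 := by
  refine le_antisymm (iSup_le fun u => ?_) bot_le
  rw [nonpos_iff_eq_zero, ENNReal.ofReal_eq_zero, quadCgf]
  linarith [hT.inner_nonneg_left u]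

theorem ennConjugate_quadCgf_le (hT : T.IsPositive) (hxh : xh - l • T xh = μ) :
    ennConjugate (quadCgf μ T) xh ≤ ENNReal.ofReal (l / 2 * (‖xh‖ ^ 2 - ⟪xh, μ⟫)) := by
  refine iSup_le fun u => ENNReal.ofReal_le_ofReal ?_
  have h := hT.inner_nonneg_left (u - l • xh)
  subst hxh
  simp only [quadCgf, map_sub, map_smul, inner_sub_left, inner_sub_right, inner_smul_left,
    inner_smul_right, real_inner_self_eq_norm_sq, RCLike.conj_to_real] at h ⊢
  rw [hT.isSymmetric u xh, hT.isSymmetric xh xh, ← real_inner_comm (T xh) u] at h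
  linarith

theorem le_ennConjugate_quadCgf (hT : T.IsSymmetric) (hm : IsLagrangeMultiplier T μ l xh) (x : E) :
    ENNReal.ofReal (l / 2 * (‖x‖ ^ 2 - ⟪xh, μ⟫)) ≤ ennConjugate (quadCgf μ T) x := by
  obtain ⟨hl, hlT, hxh⟩ := hm
  refine le_trans (ENNReal.ofReal_le_ofReal ?_)
    (le_iSup (fun u => ENNReal.ofReal (⟪u, x⟫ - quadCgf μ T u)) (l • x))
  have h := mul_le_mul_of_nonneg_left (hlT (x - xh)) (div_nonneg hl zero_le_two)
  subst hxh
  simp only [quadCgf, map_sub, map_smul, inner_sub_left, inner_sub_right, inner_smul_left,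
    inner_smul_right, real_inner_self_eq_norm_sq, RCLike.conj_to_real, norm_sub_sq_real] at h ⊢
  rw [hT x xh, hT xh xh, ← real_inner_comm (T xh) x] at h
  linarith

theorem ofReal_le_infNormGe_quadCgf (hT : T.IsSymmetric) (hm : IsLagrangeMultiplier T μ l xh)
    {t : ℝ} (ht : 0 ≤ t) :
    ENNReal.ofReal (l / 2 * (t ^ 2 - ⟪xh, μ⟫)) ≤ infNormGe (ennConjugate (quadCgf μ T)) t := by
  refine le_iInf₂ fun x (hx : t ≤ ‖x‖) => le_trans ?_ (le_ennConjugate_quadCgf hT hm x)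
  have := hm.1
  gcongr

theorem exists_isLagrangeMultiplier_lt_ofReal (hT : T.IsPositive)
    (hcert : T ≠ 0 → ∀ r, ‖μ‖ ≤ r → ∃ l xh, IsLagrangeMultiplier T μ l xh ∧ ‖xh‖ = r)
    {r : ℝ} (hr : ‖μ‖ < r) {c : ℝ≥0∞} (hc : c < infNormGe (ennConjugate (quadCgf μ T)) r) :
    ∃ l xh, IsLagrangeMultiplier T μ l xh ∧ c < ENNReal.ofReal (l / 2 * (r ^ 2 - ⟪xh, μ⟫)) := by
  rcases eq_or_ne T 0 with rfl | hT0
  -- For `T = 0` the conjugate is `⊤` off `μ`, and every `l ≥ 0` is a multiplier at `xh = μ`.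
  · obtain ⟨n, hn⟩ := ENNReal.exists_nat_gt hc.ne_top
    have hd : 0 < r ^ 2 - ‖μ‖ ^ 2 := by nlinarith [norm_nonneg μ]
    refine ⟨2 * n / (r ^ 2 - ‖μ‖ ^ 2), μ, ⟨by positivity, by simp, by simp⟩, ?_⟩
    have hn' : 2 * (n : ℝ) / (r ^ 2 - ‖μ‖ ^ 2) / 2 * (r ^ 2 - ‖μ‖ ^ 2) = n := by field_simp
    rwa [real_inner_self_eq_norm_sq, hn', ENNReal.ofReal_natCast]
  · obtain ⟨l, xh, hm, rfl⟩ := hcert hT0 r hr.le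
    exact ⟨l, xh, hm, hc.trans_le ((infNormGe_le le_rfl).trans (ennConjugate_quadCgf_le hT hm.2.2))⟩

theorem convexOn_infNormGe_quadCgf (hT : T.IsPositive)
    (hcert : T ≠ 0 → ∀ r, ‖μ‖ ≤ r → ∃ l xh, IsLagrangeMultiplier T μ l xh ∧ ‖xh‖ = r) :
    ConvexOn ℝ≥0 (Ici 0) (infNormGe (ennConjugate (quadCgf μ T))) := by
  refine .of_forall_lt_exists_minorant (NNReal.convex_iff.2 (convex_Ici 0)) fun r hr c hc => ?_
  have hr' : ‖μ‖ < r := by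
    by_contra! h
    have := (infNormGe_le h).trans (ennConjugate_quadCgf_self hT).le
    exact ENNReal.not_lt_zero (hc.trans_le this)
  obtain ⟨l, xh, hm, hlt⟩ := exists_isLagrangeMultiplier_lt_ofReal hT hcert hr' hc
  refine ⟨fun t => ENNReal.ofReal (l / 2 * (t ^ 2 - ⟪xh, μ⟫)), ?_,
    fun t ht => ofReal_le_infNormGe_quadCgf hT.isSymmetric hm ht, hlt⟩
  have hsq : ConvexOn ℝ (Ici 0) fun t : ℝ => l / 2 * (t ^ 2 - ⟪xh, μ⟫) := by
    simpa [sub_eq_add_neg, smul_eq_mul] using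
      ((even_two.convexOn_pow.add_const (-⟪xh, μ⟫)).smul (div_nonneg hm.1 zero_le_two)).subset
        (subset_univ _) (convex_Ici 0)
  exact hsq.ennreal_ofReal

end Quadratic

section Secular

/-- `IsLagrangeMultiplier` written in an eigenbasis of `T` with eigenvalues `t₀, t₁`, for a point
`(y₀, y₁)` of squared norm `ρ`, where `(m₀, m₁)` are the coordinates of `μ`. -/
def HasSecularSolution (t₀ t₁ m₀ m₁ ρ : ℝ) : Prop :=
  ∃ l y₀ y₁, 0 ≤ l ∧ l * t₀ ≤ 1 ∧ l * t₁ ≤ 1 ∧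
    (1 - l * t₀) * y₀ = m₀ ∧ (1 - l * t₁) * y₁ = m₁ ∧ y₀ ^ 2 + y₁ ^ 2 = ρ

variable {t₀ t₁ m₀ m₁ ρ : ℝ}

theorem HasSecularSolution.swap (h : HasSecularSolution t₀ t₁ m₀ m₁ ρ) :
    HasSecularSolution t₁ t₀ m₁ m₀ ρ := by
  obtain ⟨l, y₀, y₁, hl, h₀, h₁, e₀, e₁, hy⟩ := h
  exact ⟨l, y₁, y₀, hl, h₁, h₀, e₁, e₀, by linarith⟩

theorem continuousOn_div_one_sub_mul_sq {t m b : ℝ} (ht : 0 ≤ t) (hm : m ≠ 0 → b * t < 1) :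
    ContinuousOn (fun l => (m / (1 - l * t)) ^ 2) (Icc 0 b) := by
  rcases eq_or_ne m 0 with rfl | hm0
  · simpa using continuousOn_const
  refine (continuousOn_const.div (by fun_prop) fun l hl => ?_).pow 2
  nlinarith [hm hm0, hl.2]

theorem one_sub_mul_mul_div_cancel {t m b l : ℝ} (ht : 0 ≤ t) (hm : m ≠ 0 → b * t < 1)
    (hl : l ≤ b) : (1 - l * t) * (m / (1 - l * t)) = m := by
  rcases eq_or_ne m 0 with rfl | hm0
  · simp
  exact mul_div_cancel₀ _ (by nlinarith [hm hm0])

theorem hasSecularSolution_of_le {b : ℝ} (hb : 0 ≤ b) (ht₀ : 0 ≤ t₀) (ht₁ : 0 ≤ t₁)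
    (hb₀ : b * t₀ ≤ 1) (hb₁ : b * t₁ ≤ 1) (hm₀ : m₀ ≠ 0 → b * t₀ < 1)
    (hm₁ : m₁ ≠ 0 → b * t₁ < 1) (hlo : m₀ ^ 2 + m₁ ^ 2 ≤ ρ)
    (hhi : ρ ≤ (m₀ / (1 - b * t₀)) ^ 2 + (m₁ / (1 - b * t₁)) ^ 2) :
    HasSecularSolution t₀ t₁ m₀ m₁ ρ := by
  obtain ⟨l, hl, hρ⟩ := intermediate_value_Icc hb
    ((continuousOn_div_one_sub_mul_sq ht₀ hm₀).add (continuousOn_div_one_sub_mul_sq ht₁ hm₁))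
    ⟨by simpa using hlo, hhi⟩
  refine ⟨l, _, _, hl.1, by nlinarith [hl.2], by nlinarith [hl.2],
    one_sub_mul_mul_div_cancel ht₀ hm₀ hl.2, one_sub_mul_mul_div_cancel ht₁ hm₁ hl.2, hρ⟩

theorem hasSecularSolution_of_ne_zero (hm₀ : m₀ ≠ 0) (ht₁ : 0 ≤ t₁) (h₁₀ : t₁ ≤ t₀)
    (ht₀ : 0 < t₀) (hρ : m₀ ^ 2 + m₁ ^ 2 ≤ ρ) : HasSecularSolution t₀ t₁ m₀ m₁ ρ := by
  have hm₀' : 0 < m₀ ^ 2 := by positivity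
  have hρ₀ : 0 < ρ := by nlinarith [sq_nonneg m₁]
  -- `δ` is small enough that already `(m₀ / δ) ^ 2 ≥ ρ`
  set δ := m₀ ^ 2 / (ρ + 1) with hδ
  have hδ₀ : 0 < δ := by positivity
  have hδ₁ : δ < 1 := by rw [div_lt_one (by positivity)]; nlinarith [sq_nonneg m₁]
  set b := (1 - δ) / t₀
  have hb : 0 ≤ b := div_nonneg (by linarith) ht₀.le
  have hbt₀ : b * t₀ = 1 - δ := div_mul_cancel₀ _ ht₀.ne'
  have hbt₁ : b * t₁ ≤ b * t₀ := mul_le_mul_of_nonneg_left h₁₀ hb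
  refine hasSecularSolution_of_le hb ht₀.le ht₁ (by linarith) (by linarith) (fun _ => by linarith)
    (fun _ => by linarith) hρ ?_
  have hρδ : ρ ≤ (m₀ / δ) ^ 2 := by
    rw [hδ, div_div_eq_mul_div, div_pow, le_div_iff₀ (by positivity)]
    nlinarith
  rw [hbt₀, sub_sub_cancel]
  nlinarith [sq_nonneg (m₁ / (1 - b * t₁))]

theorem hasSecularSolution (ht₁ : 0 ≤ t₁) (h₁₀ : t₁ ≤ t₀) (ht₀ : 0 < t₀)
    (hρ : m₀ ^ 2 + m₁ ^ 2 ≤ ρ) : HasSecularSolution t₀ t₁ m₀ m₁ ρ := by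
  by_cases hm₀ : m₀ ≠ 0
  · exact hasSecularSolution_of_ne_zero hm₀ ht₁ h₁₀ ht₀ hρ
  by_cases hm₁ : t₁ = t₀ ∧ m₁ ≠ 0
  · exact (hasSecularSolution_of_ne_zero hm₁.2 ht₀.le hm₁.1.ge (hm₁.1 ▸ ht₀)
      (by linarith)).swap
  rw [not_not] at hm₀
  subst hm₀
  set b := t₀⁻¹
  have hbt₀ : b * t₀ = 1 := inv_mul_cancel₀ ht₀.ne'
  have hbt₁ : b * t₁ ≤ 1 := hbt₀ ▸ mul_le_mul_of_nonneg_left h₁₀ (inv_nonneg.2 ht₀.le)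
  have hb₁ : m₁ ≠ 0 → b * t₁ < 1 := fun hm => hbt₁.lt_of_ne fun h =>
    hm₁ ⟨by rw [← hbt₀] at h; exact mul_left_cancel₀ (inv_ne_zero ht₀.ne') h, hm⟩
  by_cases hc : ρ ≤ (m₁ / (1 - b * t₁)) ^ 2
  · exact hasSecularSolution_of_le (inv_nonneg.2 ht₀.le) ht₀.le ht₁ hbt₀.le hbt₁ (absurd rfl)
      hb₁ hρ (by simpa using hc)
  -- hard case: at `l = 1 / t₀` the coordinate `y₀` is free and absorbs the remaining norm
  · refine ⟨b, √(ρ - (m₁ / (1 - b * t₁)) ^ 2), _, inv_nonneg.2 ht₀.le, hbt₀.le, hbt₁,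
      by simp [hbt₀], one_sub_mul_mul_div_cancel ht₁ hb₁ le_rfl, ?_⟩
    rw [Real.sq_sqrt (by linarith)]
    ring

end Secular

section Eigenbasis

variable {E : Type*} [NormedAddCommGroup E] [InnerProductSpace ℝ E]
  {T : E →ₗ[ℝ] E} {μ xh : E} {l : ℝ}

theorem isLagrangeMultiplier_of_eigenbasis {ι : Type*} [Fintype ι] (hT : T.IsSymmetric)
    (b : OrthonormalBasis ι ℝ E) {τ : ι → ℝ} (hb : ∀ i, T (b i) = τ i • b i) (hl : 0 ≤ l)
    (hlτ : ∀ i, l * τ i ≤ 1) (hxh : ∀ i, (1 - l * τ i) * ⟪b i, xh⟫ = ⟪b i, μ⟫) :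
    IsLagrangeMultiplier T μ l xh := by
  have hcoord : ∀ i x, ⟪b i, T x⟫ = τ i * ⟪b i, x⟫ := fun i x => by
    rw [← hT, hb, real_inner_smul_left]
  refine ⟨hl, fun x => ?_, ?_⟩
  · rw [← b.sum_sq_inner_right x, ← b.sum_inner_mul_inner (T x) x, Finset.mul_sum]
    refine Finset.sum_le_sum fun i _ => ?_
    rw [real_inner_comm, hcoord]
    nlinarith [hlτ i, sq_nonneg ⟪b i, x⟫]
  · rw [← b.sum_repr' (xh - l • T xh), ← b.sum_repr' μ]
    refine Finset.sum_congr rfl fun i _ => ?_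
    rw [inner_sub_right, real_inner_smul_right, hcoord, ← hxh]
    ring_nf

theorem exists_isLagrangeMultiplier_norm_eq [FiniteDimensional ℝ E]
    (hn : Module.finrank ℝ E = 2) (hT : T.IsPositive) (hT0 : T ≠ 0) {r : ℝ} (hr : ‖μ‖ ≤ r) :
    ∃ l xh, IsLagrangeMultiplier T μ l xh ∧ ‖xh‖ = r := by
  set b := hT.isSymmetric.eigenvectorBasis hn
  set τ := hT.isSymmetric.eigenvalues hn
  have hb : ∀ i, T (b i) = τ i • b i := hT.isSymmetric.apply_eigenvectorBasis hn
  have hτ : ∀ i, 0 ≤ τ i := hT.nonneg_eigenvalues hn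
  have hτ0 : τ 0 ≠ 0 ∨ τ 1 ≠ 0 := by
    by_contra! h
    exact hT0 (b.toBasis.ext fun i => by fin_cases i <;> simp [hb, h])
  have hρ : ⟪b 0, μ⟫ ^ 2 + ⟪b 1, μ⟫ ^ 2 ≤ r ^ 2 := by
    rw [← Fin.sum_univ_two (fun i => ⟪b i, μ⟫ ^ 2), b.sum_sq_inner_right]
    exact pow_le_pow_left₀ (norm_nonneg _) hr 2
  obtain ⟨l, y₀, y₁, hl, h₀, h₁, e₀, e₁, hy⟩ :
      HasSecularSolution (τ 0) (τ 1) ⟪b 0, μ⟫ ⟪b 1, μ⟫ (r ^ 2) := by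
    rcases le_total (τ 1) (τ 0) with h | h
    · refine hasSecularSolution (hτ 1) h ?_ hρ
      rcases hτ0 with h0 | h1
      exacts [(hτ 0).lt_of_ne' h0, ((hτ 1).lt_of_ne' h1).trans_le h]
    · refine (hasSecularSolution (hτ 0) h ?_ (by linarith)).swap
      rcases hτ0 with h0 | h1
      exacts [((hτ 0).lt_of_ne' h0).trans_le h, (hτ 1).lt_of_ne' h1]
  have hcoord : ∀ i, ⟪b i, y₀ • b 0 + y₁ • b 1⟫ = ![y₀, y₁] i := by
    have h01 : ⟪b 0, b 1⟫ = 0 := b.orthonormal.2 (by decide)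
    have h10 : ⟪b 1, b 0⟫ = 0 := b.orthonormal.2 (by decide)
    intro i
    fin_cases i <;> simp [inner_add_right, real_inner_smul_right, h01, h10]
  refine ⟨l, y₀ • b 0 + y₁ • b 1, isLagrangeMultiplier_of_eigenbasis hT.isSymmetric b hb hl
    (Fin.forall_fin_two.2 ⟨h₀, h₁⟩) (Fin.forall_fin_two.2 ⟨?_, ?_⟩), ?_⟩
  · rw [hcoord]; exact e₀
  · rw [hcoord]; exact e₁
  · refine (pow_left_inj₀ (norm_nonneg _) ((norm_nonneg μ).trans hr) two_ne_zero).1 ?_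
    rw [← b.sum_sq_inner_right, Fin.sum_univ_two, hcoord, hcoord]
    simpa using hy

end Eigenbasis

theorem Matrix.inner_toEuclideanLin_self {n : Type*} [Fintype n] [DecidableEq n]
    (A : Matrix n n ℝ) (u : EuclideanSpace ℝ n) :
    ⟪A.toEuclideanLin u, u⟫ = ∑ i, ∑ j, u i * A i j * u j := by
  simp only [PiLp.inner_apply, RCLike.inner_apply, conj_trivial, Matrix.toLpLin_apply,
    Matrix.mulVec, dotProduct, Finset.mul_sum]
  exact Finset.sum_congr rfl fun _ _ => Finset.sum_congr rfl fun _ _ => by ring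

section Gaussian

variable {Ω : Type*} [MeasurableSpace Ω] {P : Measure Ω} {X1 : Ω → E2}

theorem memLp_two_of_map_eq_gaussianReal {Y : Ω → ℝ} {m : ℝ} {v : ℝ≥0}
    (h : P.map Y = gaussianReal m v) : MemLp Y 2 P := by
  have hY : AEMeasurable Y P := aemeasurable_of_map_neZero (by rw [h]; infer_instance)
  exact (memLp_map_measure_iff aestronglyMeasurable_id hY).1
    (h ▸ memLp_id_gaussianReal' 2 (by simp))

theorem cgfT_eq_quadCgf (hT : (covM P X1).toEuclideanLin.IsPositive)
    (hGauss : ∀ u : E2, P.map (fun ω => ⟪u, X1 ω⟫) =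
      gaussianReal ⟪u, meanv P X1⟫ (Real.toNNReal (∑ i, ∑ j, u i * covM P X1 i j * u j))) :
    cgfT P X1 = quadCgf (meanv P X1) (covM P X1).toEuclideanLin := by
  ext u
  have hQ := hT.inner_nonneg_left u
  rw [Matrix.inner_toEuclideanLin_self] at hQ
  have hmgf := mgf_gaussianReal (hGauss u) 1
  simp only [mgf, one_mul] at hmgf
  rw [cgfT, lapT, hmgf, Real.log_exp, Real.coe_toNNReal _ hQ, quadCgf,
    Matrix.inner_toEuclideanLin_self]
  ring

variable [IsProbabilityMeasure P]

theorem covM_eq_covariance (hX : ∀ i, MemLp (fun ω => X1 ω i) 2 P) (i j : Fin 2) :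
    covM P X1 i j = cov[fun ω => X1 ω i, fun ω => X1 ω j; P] := by
  have hint : Integrable X1 P := (EuclideanSpace.equiv (Fin 2) ℝ).integrable_comp_iff.1
    (integrable_pi_iff.2 fun i => (hX i).integrable one_le_two)
  have hmean : ∀ k, meanv P X1 k = ∫ ω, X1 ω k ∂P := fun k =>
    ((EuclideanSpace.proj k).integral_comp_comm hint).symm
  rw [covariance_eq_sub (hX i) (hX j), covM, Matrix.of_apply, hmean, hmean]
  rfl

theorem isPositive_toEuclideanLin_covM (hX : ∀ i, MemLp (fun ω => X1 ω i) 2 P) :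
    (covM P X1).toEuclideanLin.IsPositive := by
  refine ⟨Matrix.isSymmetric_toEuclideanLin_iff.2 ?_, fun u => ?_⟩
  · ext i j
    simp [covM_eq_covariance hX, covariance_comm]
  · rw [RCLike.re_to_real, Matrix.inner_toEuclideanLin_self]
    calc 0 ≤ Var[fun ω => ∑ i, u i * X1 ω i; P] := variance_nonneg _ _
      _ = ∑ i, ∑ j, u i * covM P X1 i j * u j := by
        rw [variance_fun_sum fun i => (hX i).const_mul (u i)]
        simp only [covariance_const_mul_left, covariance_const_mul_right, covM_eq_covariance hX]
        exact Finset.sum_congr rfl fun _ _ => Finset.sum_congr rfl fun _ _ => by ring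

end Gaussian

theorem radMin_convex_of_gaussian_general
    {Ω : Type*} [MeasurableSpace Ω] (P : Measure Ω) [IsProbabilityMeasure P]
    (X1 : Ω → E2)
    (hGauss : ∀ u : E2,
      P.map (fun ω => ⟪u, X1 ω⟫) =
        ProbabilityTheory.gaussianReal ⟪u, meanv P X1⟫
          (Real.toNNReal (∑ i, ∑ j, u i * covM P X1 i j * u j))) :
    ENNConvexOn Set.univ (radMin P X1) := by
  have hX : ∀ i, MemLp (fun ω => X1 ω i) 2 P := fun i => by
    simpa [EuclideanSpace.inner_single_left] using
      memLp_two_of_map_eq_gaussianReal (hGauss (EuclideanSpace.single i 1))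
  have hT := isPositive_toEuclideanLin_covM hX
  have hrad : radMin P X1 =
      radialInf (ennConjugate (quadCgf (meanv P X1) (covM P X1).toEuclideanLin)) := by
    rw [← cgfT_eq_quadCgf hT hGauss]
    rfl
  rw [hrad]
  exact ennConvexOn_radialInf (convexOn_ennConjugate _) (convexOn_infNormGe_quadCgf hT
    fun hT0 _ hr => exists_isLagrangeMultiplier_norm_eq finrank_euclideanSpace_fin hT hT0 hr)

/-- If `X₁` has a Gaussian distribution on `ℝ²` with mean `μ` and covariance
matrix `Σ` (possibly degenerate), then the radial minimum function `ubar I` is convex.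
A random vector is Gaussian`(μ, Σ)` iff each linear functional `u·X₁` is a real Gaussian
with mean `u·μ` and variance `uᵀΣu`; this standard characterization is used as hypothesis. -/
theorem radMin_convex_of_gaussian
    {Ω : Type*} [MeasurableSpace Ω] (P : Measure Ω) [IsProbabilityMeasure P]
    (X1 : Ω → E2) (hX : Measurable X1)
    (hLap : ∀ u : E2, Integrable (fun ω => Real.exp ⟪u, X1 ω⟫) P)
    (hGauss : ∀ u : E2,
      P.map (fun ω => ⟪u, X1 ω⟫) =
        ProbabilityTheory.gaussianReal ⟪u, meanv P X1⟫
          (Real.toNNReal (∑ i, ∑ j, u i * covM P X1 i j * u j))) :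
    ENNConvexOn Set.univ (radMin P X1) :=
  radMin_convex_of_gaussian_general P X1 hGauss
end
end

section
/- For every r ≥ |μ|, (conv ubar I)(r) = (bar K)*(r), i.e. the largest convex minorant of the radial minimum of the rate function equals, on [|μ|, ∞), the Legendre–Fenchel conjugate of the radial maximum of the cumulant generating function. -/
/-!
For `p ≥ 0` the function `s ↦ p s - bar K(p)` is a convex minorant of `ubar I`, because
`I(sℓ) ≥ ⟨pℓ, sℓ⟩ - K(pℓ) ≥ p s - bar K(p)`; this gives `(bar K)* ≤ conv ubar I`.

Conversely, let `h` be a convex minorant of `ubar I` and `c < h(r)` with `r > |μ|`. Jensen's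
inequality `K(u) ≥ ⟨u, μ⟩` gives `ubar I(|μ|) = 0`, and `ubar I` is lower semicontinuous since `I`
is and the unit circle is compact. Hence `ubar I > c` near `r`, and the slopes
`(c - ubar I(s))/(r - s)`, `s < r`, are bounded above; by convexity of `h` their supremum `p ≥ 0`
is at most every slope `(ubar I(s) - c)/(s - r)`, `s > r`, so `s ↦ c + p (s - r)` lies below
`ubar I`. Finally, an affine minorant `p s - b` of `ubar I` forces `bar K(p) ≤ b`: for `u = pℓ`
and `a < K(u)`, the convex continuous `K` has an affine minorant `⟨·, v⟩ + c'` taking the value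
`a` at `u`, so `p|v| - b ≤ ubar I(|v|) ≤ I(v) ≤ p|v| - a`.
-/

open MeasureTheory Set Filter
open scoped ENNReal NNReal RealInnerProductSpace Topology

noncomputable section

/-- The radial maximum `bar K(p) = max_{|ℓ|=1} K(pℓ)` of the cumulant generating function. -/
def barK {Ω : Type*} [MeasurableSpace Ω] (P : Measure Ω) (X1 : Ω → E2) (p : ℝ) : ℝ :=
  sSup ((fun ℓ : E2 => cgfT P X1 (p • ℓ)) '' {ℓ : E2 | ‖ℓ‖ = 1})

/-- The radial maximum `bar 𝓛(p) = max_{|ℓ|=1} 𝓛(pℓ)` of the Laplace transform. -/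
def barL {Ω : Type*} [MeasurableSpace Ω] (P : Measure Ω) (X1 : Ω → E2) (p : ℝ) : ℝ :=
  sSup ((fun ℓ : E2 => lapT P X1 (p • ℓ)) '' {ℓ : E2 | ‖ℓ‖ = 1})

/-- The set of maximal directions `bar Λ_p = argmax_{|ℓ|=1} K(pℓ)`. -/
def maxDirs {Ω : Type*} [MeasurableSpace Ω] (P : Measure Ω) (X1 : Ω → E2) (p : ℝ) :
    Set E2 :=
  {ℓ : E2 | ‖ℓ‖ = 1 ∧ ∀ ℓ' : E2, ‖ℓ'‖ = 1 → cgfT P X1 (p • ℓ') ≤ cgfT P X1 (p • ℓ)}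

/-- The Legendre–Fenchel conjugate `(bar K)*(r) = sup_{p}(pr − bar K(p))` of `bar K`,
where `bar K(p) = +∞` for `p < 0` (so the supremum runs over `p ≥ 0`).  Since the value
`0·r − bar K(0) = −K̄(0) = 0` is attained, the `ℝ≥0∞`-valued clamped supremum agrees with
the usual one. -/
def barKconj {Ω : Type*} [MeasurableSpace Ω] (P : Measure Ω) (X1 : Ω → E2) (r : ℝ) :
    ℝ≥0∞ :=
  ⨆ p ∈ Set.Ici (0 : ℝ), ENNReal.ofReal (p * r - barK P X1 p)


theorem lowerSemicontinuous_biInf_of_isCompact {α β γ : Type*} [TopologicalSpace α]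
    [TopologicalSpace β] [CompleteLinearOrder γ] [DenselyOrdered γ] {K : Set β}
    (hK : IsCompact K) {F : α → β → γ} (hF : LowerSemicontinuous (Function.uncurry F)) :
    LowerSemicontinuous fun a => ⨅ b ∈ K, F a b := by
  intro a t ht
  obtain ⟨t', htt', ht'⟩ := exists_between ht
  have hnear : ∀ᶠ a' in 𝓝 a, ∀ b ∈ K, t' < F a' b :=
    hK.eventually_forall_of_forall_eventually fun b hb =>
      hF (a, b) t' (ht'.trans_le (biInf_le _ hb))
  filter_upwards [hnear] with a' ha'
  exact htt'.trans_le (le_iInf₂ fun b hb => (ha' b hb).le)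

theorem ENNConvexOn.le_ofReal_mul_add_ofReal_mul {h : ℝ → ℝ≥0∞} (hconv : ENNConvexOn univ h)
    {a b : ℝ} (ha : 0 ≤ a) (hb : 0 ≤ b) (hab : a + b = 1) (x y : ℝ) :
    h (a * x + b * y) ≤ ENNReal.ofReal a * h x + ENNReal.ofReal b * h y := by
  have := hconv (mem_univ x) (mem_univ y) a.toNNReal b.toNNReal
    (by rw [← Real.toNNReal_add ha hb, hab, Real.toNNReal_one])
  rwa [Real.coe_toNNReal _ ha, Real.coe_toNNReal _ hb] at this

theorem ennConvexOn_ofReal_affine (p b : ℝ) :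
    ENNConvexOn univ fun x => ENNReal.ofReal (p * x - b) := by
  intro x _ y _ s t hst
  have hst' : (s : ℝ) + t = 1 := by exact_mod_cast hst
  calc ENNReal.ofReal (p * (s * x + t * y) - b)
      = ENNReal.ofReal (s * (p * x - b) + t * (p * y - b)) := by
        congr 1; linear_combination b * hst'
    _ ≤ ENNReal.ofReal (s * (p * x - b)) + ENNReal.ofReal (t * (p * y - b)) :=
        ENNReal.ofReal_add_le
    _ = s * ENNReal.ofReal (p * x - b) + t * ENNReal.ofReal (p * y - b) := by
        rw [ENNReal.ofReal_mul s.coe_nonneg, ENNReal.ofReal_mul t.coe_nonneg,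
          ENNReal.ofReal_coe_nnreal, ENNReal.ofReal_coe_nnreal]

theorem ENNConvexOn.slope_le_slope_of_lt {ψ h : ℝ → ℝ≥0∞} (hconv : ENNConvexOn univ h)
    (hmin : ∀ y, h y ≤ ψ y) {r c s₁ s₂ : ℝ} (hc : 0 ≤ c) (hcr : ENNReal.ofReal c < h r)
    (h₁ : s₁ < r) (h₂ : r < s₂) (hψ₁ : ψ s₁ ≠ ⊤) (hψ₂ : ψ s₂ ≠ ⊤) :
    (c - (ψ s₁).toReal) / (r - s₁) ≤ ((ψ s₂).toReal - c) / (s₂ - r) := by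
  have hd : 0 < s₂ - s₁ := by linarith
  have ha : 0 ≤ (s₂ - r) / (s₂ - s₁) := div_nonneg (by linarith) hd.le
  have hb : 0 ≤ (r - s₁) / (s₂ - s₁) := div_nonneg (by linarith) hd.le
  have hchord := hconv.le_ofReal_mul_add_ofReal_mul ha hb (by field_simp; ring) s₁ s₂
  rw [show (s₂ - r) / (s₂ - s₁) * s₁ + (r - s₁) / (s₂ - s₁) * s₂ = r by field_simp; ring]
    at hchord
  have hlt : ENNReal.ofReal c < ENNReal.ofReal
      (((s₂ - r) * (ψ s₁).toReal + (r - s₁) * (ψ s₂).toReal) / (s₂ - s₁)) :=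
    calc ENNReal.ofReal c < h r := hcr
      _ ≤ ENNReal.ofReal ((s₂ - r) / (s₂ - s₁)) * ψ s₁ +
          ENNReal.ofReal ((r - s₁) / (s₂ - s₁)) * ψ s₂ :=
        hchord.trans (by gcongr <;> apply hmin)
      _ = _ := by
        rw [← ENNReal.ofReal_toReal hψ₁, ← ENNReal.ofReal_toReal hψ₂, ← ENNReal.ofReal_mul ha,
          ← ENNReal.ofReal_mul hb, ← ENNReal.ofReal_add (by positivity) (by positivity),
          ENNReal.toReal_ofReal ENNReal.toReal_nonneg, ENNReal.toReal_ofReal ENNReal.toReal_nonneg]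
        ring_nf
  rw [ENNReal.ofReal_lt_ofReal_iff_of_nonneg hc, lt_div_iff₀ hd] at hlt
  rw [div_le_div_iff₀ (by linarith) (by linarith)]
  nlinarith

theorem bddAbove_slopes_of_lowerSemicontinuousAt {ψ : ℝ → ℝ≥0∞} {r c : ℝ}
    (hψ : LowerSemicontinuousAt ψ r) (hc : 0 ≤ c) (hcr : ENNReal.ofReal c < ψ r) :
    BddAbove ((fun s => (c - (ψ s).toReal) / (r - s)) '' {s | s < r ∧ ψ s ≠ ⊤}) := by
  obtain ⟨δ, hδ, hnear⟩ := Metric.eventually_nhds_iff.1 (hψ _ hcr)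
  refine ⟨c / δ, ?_⟩
  rintro _ ⟨s, ⟨hs, hψs⟩, rfl⟩
  have hrs : 0 < r - s := sub_pos.2 hs
  by_cases hsδ : r - s < δ
  · have hcψ : c < (ψ s).toReal := (ENNReal.ofReal_lt_iff_lt_toReal hc hψs).1
      (hnear (by rwa [Real.dist_eq, abs_sub_comm, abs_of_pos hrs]))
    exact (div_neg_of_neg_of_pos (by linarith) hrs).le.trans (by positivity)
  · calc (c - (ψ s).toReal) / (r - s) ≤ c / (r - s) := by
          gcongr; exact sub_le_self _ ENNReal.toReal_nonneg
      _ ≤ c / δ := div_le_div_of_nonneg_left hc hδ (not_lt.1 hsδ)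

theorem ENNConvexOn.exists_affine_le_of_lt {ψ h : ℝ → ℝ≥0∞} (hconv : ENNConvexOn univ h)
    (hmin : ∀ y, h y ≤ ψ y) {r₀ r c : ℝ} (hr₀ : r₀ < r) (hψr₀ : ψ r₀ ≠ ⊤)
    (hψ : LowerSemicontinuousAt ψ r) (hc : 0 ≤ c) (hcr : ENNReal.ofReal c < h r) :
    ∃ p, ∀ s, ENNReal.ofReal (p * s - (p * r - c)) ≤ ψ s := by
  set S := (fun s => (c - (ψ s).toReal) / (r - s)) '' {s | s < r ∧ ψ s ≠ ⊤}
  have hS : S.Nonempty := ⟨_, r₀, ⟨hr₀, hψr₀⟩, rfl⟩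
  have hcψ : ENNReal.ofReal c < ψ r := hcr.trans_le (hmin r)
  have hbdd : BddAbove S := bddAbove_slopes_of_lowerSemicontinuousAt hψ hc hcψ
  refine ⟨sSup S, fun s => ?_⟩
  rcases eq_or_ne (ψ s) ⊤ with htop | hψs
  · simp [htop]
  refine ENNReal.ofReal_le_of_le_toReal ?_
  rcases lt_trichotomy s r with hs | rfl | hs
  · have hslope := le_csSup hbdd ⟨s, ⟨hs, hψs⟩, rfl⟩
    rw [div_le_iff₀ (sub_pos.2 hs)] at hslope
    linarith
  · have := (ENNReal.ofReal_lt_iff_lt_toReal hc hψs).1 hcψ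
    linarith
  · have hslope : sSup S ≤ ((ψ s).toReal - c) / (s - r) := by
      refine csSup_le hS ?_
      rintro _ ⟨s', ⟨hs', hψs'⟩, rfl⟩
      exact hconv.slope_le_slope_of_lt hmin hc hcr hs' hs hψs' hψs
    rw [le_div_iff₀ (sub_pos.2 hs)] at hslope
    linarith

theorem isCompact_setOf_norm_eq {E : Type*} [NormedAddCommGroup E] [ProperSpace E] (r : ℝ) :
    IsCompact {x : E | ‖x‖ = r} := by
  simpa [Metric.sphere, dist_zero_right] using isCompact_sphere (0 : E) r

section

variable {Ω : Type*} [MeasurableSpace Ω] {P : Measure Ω} {X1 : Ω → E2}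

theorem radMin_norm_le_rateI (v : E2) : radMin P X1 ‖v‖ ≤ rateI P X1 v := by
  obtain ⟨ℓ, hℓ, hv⟩ : ∃ ℓ : E2, ‖ℓ‖ = 1 ∧ ‖v‖ • ℓ = v := by
    rcases eq_or_ne v 0 with rfl | hv
    · obtain ⟨ℓ, hℓ⟩ := exists_norm_eq E2 zero_le_one
      exact ⟨ℓ, hℓ, by simp⟩
    · exact ⟨‖v‖⁻¹ • v, by simp [norm_smul, hv], by simp [smul_smul, hv]⟩
  rw [radMin, if_neg (not_lt.2 (norm_nonneg v))]
  exact (iInf₂_le ℓ hℓ).trans_eq (by rw [hv])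

variable (P X1) in
theorem lowerSemicontinuous_radMin : LowerSemicontinuous (radMin P X1) := by
  have hsphere : LowerSemicontinuous fun s : ℝ => ⨅ ℓ ∈ {ℓ : E2 | ‖ℓ‖ = 1}, rateI P X1 (s • ℓ) :=
    lowerSemicontinuous_biInf_of_isCompact (isCompact_setOf_norm_eq 1) <|
      lowerSemicontinuous_iSup fun u => Continuous.lowerSemicontinuous <|
        ENNReal.continuous_ofReal.comp <| by fun_prop
  have hneg : LowerSemicontinuous ((Iio 0).indicator fun _ : ℝ => (⊤ : ℝ≥0∞)) :=
    isOpen_Iio.lowerSemicontinuous_indicator le_top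
  convert hsphere.sup hneg using 1
  funext s
  by_cases hs : s < 0 <;> simp [radMin, hs]

theorem lapT_nonneg (u : E2) : 0 ≤ lapT P X1 u :=
  integral_nonneg fun _ => (Real.exp_pos _).le

variable (hLap : ∀ u : E2, Integrable (fun ω => Real.exp ⟪u, X1 ω⟫) P)
include hLap

theorem lapT_smul_add_smul_le (u w : E2) {a b : ℝ} (ha : 0 ≤ a) (hb : 0 ≤ b) (hab : a + b = 1) :
    lapT P X1 (a • u + b • w) ≤ lapT P X1 u ^ a * lapT P X1 w ^ b := by
  have hlint (u : E2) :
      ENNReal.ofReal (lapT P X1 u) = ∫⁻ ω, ENNReal.ofReal (Real.exp ⟪u, X1 ω⟫) ∂P :=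
    ofReal_integral_eq_lintegral_ofReal (hLap u) (ae_of_all _ fun _ => (Real.exp_pos _).le)
  have hmeas (u : E2) : AEMeasurable (fun ω => ENNReal.ofReal (Real.exp ⟪u, X1 ω⟫)) P :=
    (hLap u).aemeasurable.ennreal_ofReal
  have hpow (ω : Ω) : ENNReal.ofReal (Real.exp ⟪a • u + b • w, X1 ω⟫) =
      ENNReal.ofReal (Real.exp ⟪u, X1 ω⟫) ^ a * ENNReal.ofReal (Real.exp ⟪w, X1 ω⟫) ^ b := by
    rw [ENNReal.ofReal_rpow_of_nonneg (Real.exp_pos _).le ha,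
      ENNReal.ofReal_rpow_of_nonneg (Real.exp_pos _).le hb, ← ENNReal.ofReal_mul (by positivity),
      ← Real.exp_mul, ← Real.exp_mul, ← Real.exp_add, inner_add_left, real_inner_smul_left,
      real_inner_smul_left, mul_comm a, mul_comm b]
  have hu : 0 ≤ lapT P X1 u ^ a := Real.rpow_nonneg (lapT_nonneg u) a
  have hw : 0 ≤ lapT P X1 w ^ b := Real.rpow_nonneg (lapT_nonneg w) b
  rw [← ENNReal.ofReal_le_ofReal_iff (mul_nonneg hu hw), ENNReal.ofReal_mul hu,
    ← ENNReal.ofReal_rpow_of_nonneg (lapT_nonneg u) ha,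
    ← ENNReal.ofReal_rpow_of_nonneg (lapT_nonneg w) hb, hlint, hlint, hlint]
  simp_rw [hpow]
  exact ENNReal.lintegral_mul_norm_pow_le (hmeas u) (hmeas w) ha hb hab

theorem integrable_inner_of_integrable_exp_inner (u : E2) :
    Integrable (fun ω => ⟪u, X1 ω⟫) P := by
  simpa using ProbabilityTheory.integrable_pow_of_integrable_exp_mul
    (X := fun ω => ⟪u, X1 ω⟫) one_ne_zero (by simpa using hLap u)
    (by simpa [← inner_neg_left] using hLap (-u)) 1

variable [IsProbabilityMeasure P]

theorem lapT_pos (u : E2) : 0 < lapT P X1 u := integral_exp_pos (hLap u)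

omit hLap in
theorem cgfT_zero : cgfT P X1 0 = 0 := by simp [cgfT, lapT]

theorem convexOn_cgfT : ConvexOn ℝ univ (cgfT P X1) := by
  refine ⟨convex_univ, fun u _ w _ a b ha hb hab => ?_⟩
  have hu := lapT_pos hLap u
  have hw := lapT_pos hLap w
  calc cgfT P X1 (a • u + b • w) ≤ Real.log (lapT P X1 u ^ a * lapT P X1 w ^ b) :=
        Real.log_le_log (lapT_pos hLap _) (lapT_smul_add_smul_le hLap u w ha hb hab)
    _ = a • cgfT P X1 u + b • cgfT P X1 w := by
        rw [Real.log_mul (Real.rpow_pos_of_pos hu a).ne' (Real.rpow_pos_of_pos hw b).ne',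
          Real.log_rpow hu, Real.log_rpow hw, cgfT, cgfT, smul_eq_mul, smul_eq_mul]

theorem continuous_cgfT : Continuous (cgfT P X1) :=
  continuousOn_univ.1 ((convexOn_cgfT hLap).continuousOn isOpen_univ)

theorem inner_meanv_le_cgfT (u : E2) : ⟪u, meanv P X1⟫ ≤ cgfT P X1 u := by
  have hX1 : Integrable X1 P := integrable_piLp_iff.2 fun i => by
    simpa [EuclideanSpace.inner_single_left] using
      integrable_inner_of_integrable_exp_inner hLap (EuclideanSpace.single i 1)
  rw [cgfT, Real.le_log_iff_exp_le (lapT_pos hLap u), meanv, ← integral_inner hX1]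
  exact convexOn_exp.map_integral_le Real.continuous_exp.continuousOn isClosed_univ
    (ae_of_all _ fun _ => mem_univ _) (integrable_inner_of_integrable_exp_inner hLap u) (hLap u)

theorem radMin_norm_meanv : radMin P X1 ‖meanv P X1‖ = 0 := by
  refine le_antisymm ((radMin_norm_le_rateI _).trans (iSup_le fun u => ?_)) bot_le
  rw [nonpos_iff_eq_zero, ENNReal.ofReal_eq_zero, sub_nonpos]
  exact inner_meanv_le_cgfT hLap u

theorem exists_rateI_le_of_lt_cgfT {u : E2} {a : ℝ} (ha : a < cgfT P X1 u) :
    ∃ v : E2, a ≤ ⟪u, v⟫ ∧ rateI P X1 v ≤ ENNReal.ofReal (⟪u, v⟫ - a) := by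
  obtain ⟨l, c, hle, heq⟩ := (convexOn_cgfT hLap).exists_affine_le_of_lt (𝕜 := ℝ) (mem_univ u) ha
    isClosed_univ ((continuous_cgfT hLap).lowerSemicontinuous.lowerSemicontinuousOn _)
  have hlc (w : E2) : l w + c ≤ cgfT P X1 w := by simpa using hle ⟨w, mem_univ w⟩
  simp only [RCLike.re_to_real] at heq
  set v := (InnerProductSpace.toDual ℝ E2).symm l
  have hv (w : E2) : ⟪w, v⟫ = l w := by
    rw [real_inner_comm]; exact InnerProductSpace.toDual_symm_apply
  refine ⟨v, ?_, iSup_le fun w => ENNReal.ofReal_le_ofReal ?_⟩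
  · have hc : c ≤ 0 := by simpa [cgfT_zero] using hlc 0
    rw [hv]; linarith
  · rw [hv, hv]; linarith [hlc w]

theorem bddAbove_cgfT_unitSphere (p : ℝ) :
    BddAbove ((fun ℓ : E2 => cgfT P X1 (p • ℓ)) '' {ℓ : E2 | ‖ℓ‖ = 1}) :=
  (isCompact_setOf_norm_eq 1).bddAbove_image
    ((continuous_cgfT hLap).comp (continuous_const_smul p)).continuousOn

theorem cgfT_le_barK (p : ℝ) {ℓ : E2} (hℓ : ‖ℓ‖ = 1) : cgfT P X1 (p • ℓ) ≤ barK P X1 p :=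
  le_csSup (bddAbove_cgfT_unitSphere hLap p) (mem_image_of_mem _ hℓ)

theorem ofReal_sub_barK_le_radMin (p y : ℝ) :
    ENNReal.ofReal (p * y - barK P X1 p) ≤ radMin P X1 y := by
  rw [radMin]
  split_ifs with hy
  · exact le_top
  refine le_iInf₂ fun ℓ hℓ => le_iSup_of_le (p • ℓ) (ENNReal.ofReal_le_ofReal ?_)
  have hinner : ⟪p • ℓ, y • ℓ⟫ = p * y := by
    rw [real_inner_smul_left, real_inner_smul_right, real_inner_self_eq_norm_sq, hℓ]; ring
  linarith [cgfT_le_barK hLap p hℓ]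

theorem barKconj_le_convMin (r : ℝ) : barKconj P X1 r ≤ convMin (radMin P X1) r :=
  iSup₂_le fun p _ => le_iSup₂_of_le (f := fun (h : ℝ → ℝ≥0∞) _ => h r) _
    ⟨ennConvexOn_ofReal_affine p _, ofReal_sub_barK_le_radMin hLap p⟩ le_rfl

theorem barK_le_of_ofReal_sub_le_radMin {p b : ℝ} (hp : 0 ≤ p)
    (hb : ∀ s, ENNReal.ofReal (p * s - b) ≤ radMin P X1 s) : barK P X1 p ≤ b := by
  obtain ⟨ℓ₀, hℓ₀⟩ := exists_norm_eq E2 zero_le_one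
  refine csSup_le ⟨_, mem_image_of_mem _ hℓ₀⟩ ?_
  rintro _ ⟨ℓ, hℓ, rfl⟩
  refine le_of_forall_lt_imp_le_of_dense fun a ha => ?_
  obtain ⟨v, hav, hv⟩ := exists_rateI_le_of_lt_cgfT hLap ha
  have huv : ⟪p • ℓ, v⟫ ≤ p * ‖v‖ := by
    rw [real_inner_smul_left]
    exact mul_le_mul_of_nonneg_left ((real_inner_le_norm ℓ v).trans (by rw [hℓ, one_mul])) hp
  have hbv := (hb ‖v‖).trans ((radMin_norm_le_rateI v).trans hv)
  rw [ENNReal.ofReal_le_ofReal_iff (by linarith)] at hbv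
  linarith

theorem ofReal_le_barKconj_of_lt {h : ℝ → ℝ≥0∞} (hconv : ENNConvexOn univ h)
    (hmin : ∀ y, h y ≤ radMin P X1 y) {r c : ℝ} (hr : ‖meanv P X1‖ < r) (hc : 0 ≤ c)
    (hcr : ENNReal.ofReal c < h r) : ENNReal.ofReal c ≤ barKconj P X1 r := by
  have hψ₀ := radMin_norm_meanv hLap
  obtain ⟨p, hp⟩ := hconv.exists_affine_le_of_lt hmin hr (by simp [hψ₀])
    (lowerSemicontinuous_radMin P X1 r) hc hcr
  have hp₀ : 0 ≤ p := by
    have hpr₀ := hp ‖meanv P X1‖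
    rw [hψ₀, nonpos_iff_eq_zero, ENNReal.ofReal_eq_zero] at hpr₀
    exact nonneg_of_mul_nonneg_left (by rw [mul_sub]; linarith) (sub_pos.2 hr)
  calc ENNReal.ofReal c ≤ ENNReal.ofReal (p * r - barK P X1 p) :=
        ENNReal.ofReal_le_ofReal (by linarith [barK_le_of_ofReal_sub_le_radMin hLap hp₀ hp])
    _ ≤ barKconj P X1 r :=
        le_iSup₂_of_le (f := fun p _ => ENNReal.ofReal (p * r - barK P X1 p)) p hp₀ le_rfl

end

theorem convMin_radMin_eq_barKconj_general
    {Ω : Type*} [MeasurableSpace Ω] (P : Measure Ω) [IsProbabilityMeasure P]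
    (X1 : Ω → E2)
    (hLap : ∀ u : E2, Integrable (fun ω => Real.exp ⟪u, X1 ω⟫) P)
    (r : ℝ) (hr : ‖meanv P X1‖ ≤ r) :
    convMin (radMin P X1) r = barKconj P X1 r := by
  refine le_antisymm (iSup₂_le fun h ⟨hconv, hmin⟩ => ?_) (barKconj_le_convMin hLap r)
  rcases hr.eq_or_lt with rfl | hr
  · exact ((hmin _).trans_eq (radMin_norm_meanv hLap)).trans bot_le
  refine le_of_forall_lt_imp_le_of_dense fun c hc => ?_
  lift c to ℝ≥0 using ne_top_of_lt hc
  simpa using ofReal_le_barKconj_of_lt hLap hconv hmin hr c.coe_nonneg (by simpa using hc)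

/-- For every `r ≥ |μ|`, `(conv ubar I)(r) = (bar K)*(r)`: the largest
convex minorant of the radial minimum of the rate function equals, on `[|μ|, ∞)`, the
Legendre–Fenchel conjugate of the radial maximum of the cumulant generating function. -/
theorem convMin_radMin_eq_barKconj
    {Ω : Type*} [MeasurableSpace Ω] (P : Measure Ω) [IsProbabilityMeasure P]
    (X1 : Ω → E2) (hX : Measurable X1)
    (hLap : ∀ u : E2, Integrable (fun ω => Real.exp ⟪u, X1 ω⟫) P)
    (r : ℝ) (hr : ‖meanv P X1‖ ≤ r) :
    convMin (radMin P X1) r = barKconj P X1 r :=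
  convMin_radMin_eq_barKconj_general P X1 hLap r hr

end
end
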